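/- Let A = C[T_k; τ] be an Ore extension where τ(T_s) = λ T_s for a fixed element T_s ∈ C and some λ ∈ k*. If a ∈ C and aT_kⁿ lies in the two-sided ideal of A generated by T_s for some n ≥ 0, then a lies in the two-sided ideal of C generated by T_s. -/

import Mathlib

/-!
If `I` is a `τ`-stable ideal of `C`, the elements of `A = C[T; τ]` all of whose coefficients lie
in `I` form a two-sided ideal of `A`, because `T ^ i * c = τ^[i] c * T ^ i`. Since
`τ(T_s) = λ T_s`, the ideal `⟨T_s⟩_C` is `τ`-stable; its extension contains `T_s`, hence all of
`⟨T_s⟩_A`, and uniqueness of coefficients reads `a ∈ ⟨T_s⟩_C` off `a * T ^ n`.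
-/


/-- `A = C[T; τ]` is an Ore (skew polynomial) extension: `C` is a subalgebra of `A`,
`T ∈ A` satisfies `T * c = τ(c) * T` for `c ∈ C`, and the powers of `T` form a basis
of `A` as a left `C`-module. -/
structure IsOreExtension (k : Type*) [Field k] {A : Type*} [Ring A] [Algebra k A]
    (C : Subalgebra k A) (τ : C ≃ₐ[k] C) (T : A) : Prop where
  commute : ∀ c : C, T * (c : A) = (τ c : A) * T
  exists_rep : ∀ a : A, ∃ f : ℕ →₀ C, a = f.sum fun i c => (c : A) * T ^ i
  indep : ∀ f : ℕ →₀ C, (f.sum fun i c => (c : A) * T ^ i) = 0 → f = 0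


theorem TwoSidedIdeal.mapsTo_span_singleton {R : Type*} [Ring R] (σ : R →+* R) {x : R}
    (hx : σ x ∈ span {x}) : Set.MapsTo σ (span {x}) (span {x}) := fun _ hc =>
  (mem_comap σ).1 <| span_le.2 (Set.singleton_subset_iff.2 ((mem_comap σ).2 hx)) hc

namespace IsOreExtension

variable {k : Type*} [Field k] {A : Type*} [Ring A] [Algebra k A]
  {C : Subalgebra k A} {τ : C ≃ₐ[k] C} {T : A}

variable (C T) in
noncomputable def sumPow : (ℕ →₀ C) →+ A :=
  Finsupp.liftAddHom fun i => (AddMonoidHom.mulRight (T ^ i)).comp C.val.toAddMonoidHom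

theorem sumPow_apply (f : ℕ →₀ C) : sumPow C T f = f.sum fun i c => (c : A) * T ^ i := rfl

theorem sumPow_single (i : ℕ) (c : C) : sumPow C T (Finsupp.single i c) = (c : A) * T ^ i :=
  Finsupp.liftAddHom_apply_single _ _ _

theorem pow_mul_coe (hOre : IsOreExtension k C τ T) (j : ℕ) (c : C) :
    T ^ j * (c : A) = (τ^[j] c : A) * T ^ j := by
  induction j generalizing c with
  | zero => simp
  | succ j ih =>
    rw [pow_succ', mul_assoc, ih, ← mul_assoc, hOre.commute, Function.iterate_succ_apply',
      mul_assoc, ← pow_succ']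

theorem monomial_mul_monomial (hOre : IsOreExtension k C τ T) (c d : C) (i j : ℕ) :
    (c : A) * T ^ i * ((d : A) * T ^ j) = ((c * τ^[i] d : C) : A) * T ^ (i + j) := by
  rw [mul_assoc, ← mul_assoc (T ^ i), hOre.pow_mul_coe, pow_add]
  simp only [Subalgebra.coe_mul, mul_assoc]

theorem sumPow_mul_sumPow (hOre : IsOreExtension k C τ T) (f g : ℕ →₀ C) :
    sumPow C T f * sumPow C T g =
      f.sum fun i c => g.sum fun j d => ((c * τ^[i] d : C) : A) * T ^ (i + j) := by
  simp only [sumPow_apply, Finsupp.sum_mul]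
  simp only [Finsupp.mul_sum, hOre.monomial_mul_monomial]

theorem eq_single_of_sumPow_eq (hOre : IsOreExtension k C τ T) {f : ℕ →₀ C} {c : C} {n : ℕ}
    (h : sumPow C T f = (c : A) * T ^ n) : f = Finsupp.single n c :=
  sub_eq_zero.1 <| hOre.indep _ <| by rw [← sumPow_apply, map_sub, sumPow_single, h, sub_self]

variable (C) in
def coeffsIn (I : TwoSidedIdeal C) : AddSubgroup (ℕ →₀ C) where
  carrier := {f | ∀ i, f i ∈ I}
  zero_mem' _ := I.zero_mem
  add_mem' hf hg i := I.add_mem (hf i) (hg i)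
  neg_mem' hf i := I.neg_mem (hf i)

theorem single_mem_coeffsIn {I : TwoSidedIdeal C} {c : C} (hc : c ∈ I) (n : ℕ) :
    Finsupp.single n c ∈ coeffsIn C I := fun i => by
  rw [Finsupp.single_apply]
  split_ifs
  exacts [hc, I.zero_mem]

theorem monomial_mem_map_coeffsIn {I : TwoSidedIdeal C} {c : C} (hc : c ∈ I) (n : ℕ) :
    (c : A) * T ^ n ∈ (coeffsIn C I).map (sumPow C T) :=
  ⟨_, single_mem_coeffsIn hc n, sumPow_single n c⟩

noncomputable def extendIdeal (hOre : IsOreExtension k C τ T) (I : TwoSidedIdeal C)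
    (hI : Set.MapsTo τ I I) : TwoSidedIdeal A :=
  TwoSidedIdeal.mk' ((coeffsIn C I).map (sumPow C T)) (zero_mem _) add_mem neg_mem
    (fun {x _} ⟨f, hf, hy⟩ => by
      obtain ⟨g, rfl⟩ := hOre.exists_rep x
      rw [← hy, ← sumPow_apply, hOre.sumPow_mul_sumPow]
      exact sum_mem fun i _ => sum_mem fun j _ =>
        monomial_mem_map_coeffsIn (I.mul_mem_left _ _ (hI.iterate i (hf j))) _)
    (fun {_ y} ⟨f, hf, hx⟩ => by
      obtain ⟨g, rfl⟩ := hOre.exists_rep y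
      rw [← hx, ← sumPow_apply, hOre.sumPow_mul_sumPow]
      exact sum_mem fun i _ => sum_mem fun j _ =>
        monomial_mem_map_coeffsIn (I.mul_mem_right _ _ (hf i)) _)

theorem monomial_mem_extendIdeal_iff (hOre : IsOreExtension k C τ T) {I : TwoSidedIdeal C}
    (hI : Set.MapsTo τ I I) {c : C} {n : ℕ} :
    (c : A) * T ^ n ∈ hOre.extendIdeal I hI ↔ c ∈ I := by
  refine ⟨fun h => ?_, fun hc =>
    (TwoSidedIdeal.mem_mk' _ _ _ _ _ _ _).2 (monomial_mem_map_coeffsIn hc n)⟩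
  obtain ⟨f, hf, hfc⟩ := (TwoSidedIdeal.mem_mk' _ _ _ _ _ _ _).1 h
  simpa [hOre.eq_single_of_sumPow_eq hfc] using hf n

end IsOreExtension

theorem coeff_in_ideal_of_mem_ideal_Ts_general
    (k : Type*) [Field k] {A : Type*} [Ring A] [Algebra k A]
    (C : Subalgebra k A) (τ : C ≃ₐ[k] C) (Tk : A)
    (hOre : IsOreExtension k C τ Tk)
    (Ts : C) (lam : k) (hTs : τ Ts = lam • Ts)
    (a : C) (n : ℕ)
    (h : (a : A) * Tk ^ n ∈ TwoSidedIdeal.span {(Ts : A)}) :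
    a ∈ TwoSidedIdeal.span ({Ts} : Set C) := by
  have hτ : Set.MapsTo τ (TwoSidedIdeal.span {Ts}) (TwoSidedIdeal.span {Ts}) :=
    TwoSidedIdeal.mapsTo_span_singleton (τ : C →+* C) <| by
      rw [RingHom.coe_coe, hTs, Algebra.smul_def]
      exact TwoSidedIdeal.mul_mem_left _ _ _ (TwoSidedIdeal.subset_span rfl)
  have hTs_mem : (Ts : A) ∈ hOre.extendIdeal _ hτ := by
    simpa using (hOre.monomial_mem_extendIdeal_iff hτ (n := 0)).2 (TwoSidedIdeal.subset_span rfl)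
  exact (hOre.monomial_mem_extendIdeal_iff hτ).1
    (TwoSidedIdeal.span_le.2 (Set.singleton_subset_iff.2 hTs_mem) h)

/-- The Claim in the proof of Proposition 5.3 of Goodearl–Launois–Lenagan: if
`A = C[T_k; τ]` with `τ(T_s) = λ T_s` for some fixed `T_s ∈ C` and `λ ∈ k*`, and if
`a ∈ C` satisfies `a T_kⁿ ∈ ⟨T_s⟩_A` for some `n ≥ 0`, then `a ∈ ⟨T_s⟩_C`; here
`⟨T_s⟩_A` and `⟨T_s⟩_C` denote the two-sided ideals generated by `T_s` in `A` and `C`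
respectively. -/
theorem coeff_in_ideal_of_mem_ideal_Ts
    (k : Type*) [Field k] {A : Type*} [Ring A] [Algebra k A]
    (C : Subalgebra k A) (τ : C ≃ₐ[k] C) (Tk : A)
    (hOre : IsOreExtension k C τ Tk)
    (Ts : C) (lam : k) (hlam : lam ≠ 0) (hTs : τ Ts = lam • Ts)
    (a : C) (n : ℕ)
    (h : (a : A) * Tk ^ n ∈ TwoSidedIdeal.span {(Ts : A)}) :
    a ∈ TwoSidedIdeal.span ({Ts} : Set C) :=
  coeff_in_ideal_of_mem_ideal_Ts_general k C τ Tk hOre Ts lam hTs a n h
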